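/- Let φ ∈ O_K⟨x⟩, k, n ≥ 1, ψ = φ^{∘k}, and suppose x ∈ O_K satisfies ψ(x) ≡ x (mod πⁿ). Define a_n(x) = ψ'(x) and b_n(x) = (ψ(x) − x)/πⁿ ∈ O_K. Then for all t ∈ O_K: b_n(x + πⁿt) ≡ b_n(x) + t(a_n(x) − 1) (mod πⁿ). -/

import Mathlib

/-!
A power series `φ` with integral coefficients tending to zero maps `O_K` to itself, has integral
derivative, and satisfies `φ(x + h) ≡ φ(x) + h φ'(x) (mod h²)` on `O_K`: termwise,
`(x + h)^(i+1) - x^(i+1) - (i+1) x^i h` is `h²` times an integral element, and the ultrametric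
inequality passes the bound to the sum. These three properties are stable under composition
(by the chain rule), hence hold for `ψ = φ^{∘k}`. Putting `h = πⁿ t` and dividing by `πⁿ` gives
`bₙ(x + πⁿ t) - bₙ(x) - t (ψ'(x) - 1) ≡ 0 (mod πⁿ)`.
-/

open Filter Topology

/-- Evaluation of a convergent power series on the valuation ring. -/
noncomputable def evalPS {K : Type*} [NormedField K] (a : ℕ → K) (x : K) : K :=
  ∑' i : ℕ, a i * x ^ i

open IsUltrametricDist

theorem hasDerivAt_of_norm_sub_sub_mul_le_sq {K : Type*} [NontriviallyNormedField K]
    {f : K → K} {x d : K} (hf : ∀ h : K, ‖h‖ ≤ 1 → ‖f (x + h) - f x - h * d‖ ≤ ‖h‖ ^ 2) :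
    HasDerivAt f d x := by
  rw [hasDerivAt_iff_isLittleO]
  refine Asymptotics.IsBigO.trans_isLittleO (g := fun y => ‖y - x‖ ^ 2) ?_
    (Asymptotics.isLittleO_pow_sub_sub x one_lt_two)
  refine Asymptotics.IsBigO.of_bound 1 ?_
  filter_upwards [Metric.ball_mem_nhds x one_pos] with y hy
  rw [Metric.mem_ball, dist_eq_norm] at hy
  simpa [smul_eq_mul] using hf (y - x) hy.le

section UnitBall

variable {K : Type*} [NontriviallyNormedField K]

/-- The properties of a power series in `O_K⟨x⟩` on `O_K` that survive composition. -/
structure UnitBallTaylor (f : K → K) : Prop where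
  norm_le_one : ∀ {x : K}, ‖x‖ ≤ 1 → ‖f x‖ ≤ 1
  norm_deriv_le_one : ∀ {x : K}, ‖x‖ ≤ 1 → ‖deriv f x‖ ≤ 1
  norm_sub_sub_le : ∀ {x h : K}, ‖x‖ ≤ 1 → ‖h‖ ≤ 1 →
    ‖f (x + h) - f x - h * deriv f x‖ ≤ ‖h‖ ^ 2

namespace UnitBallTaylor

variable {f g : K → K}

theorem hasDerivAt (hf : UnitBallTaylor f) {x : K} (hx : ‖x‖ ≤ 1) :
    HasDerivAt f (deriv f x) x :=
  hasDerivAt_of_norm_sub_sub_mul_le_sq fun _ hh => hf.norm_sub_sub_le hx hh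

protected theorem id : UnitBallTaylor (id : K → K) where
  norm_le_one hx := hx
  norm_deriv_le_one _ := by simp
  norm_sub_sub_le _ _ := by simp

theorem norm_sub_div_sub_le (hf : UnitBallTaylor f) {c x t : K} (hc0 : c ≠ 0) (hc1 : ‖c‖ ≤ 1)
    (hx : ‖x‖ ≤ 1) (ht : ‖t‖ ≤ 1) :
    ‖(f (x + c * t) - (x + c * t)) / c - ((f x - x) / c + t * (deriv f x - 1))‖ ≤ ‖c‖ := by
  have hct : ‖c * t‖ ≤ ‖c‖ := by
    rw [norm_mul]
    exact mul_le_of_le_one_right (norm_nonneg _) ht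
  have split : (f (x + c * t) - (x + c * t)) / c - ((f x - x) / c + t * (deriv f x - 1)) =
      (f (x + c * t) - f x - c * t * deriv f x) / c := by
    field_simp
    ring
  rw [split, norm_div, div_le_iff₀ (norm_pos_iff.mpr hc0)]
  calc _ ≤ ‖c * t‖ ^ 2 := hf.norm_sub_sub_le hx (hct.trans hc1)
    _ ≤ ‖c‖ ^ 2 := by gcongr
    _ = ‖c‖ * ‖c‖ := sq _

variable [IsUltrametricDist K]

theorem norm_sub_le (hf : UnitBallTaylor f) {x h : K} (hx : ‖x‖ ≤ 1) (hh : ‖h‖ ≤ 1) :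
    ‖f (x + h) - f x‖ ≤ ‖h‖ := by
  rw [← sub_add_cancel (f (x + h) - f x) (h * deriv f x)]
  refine (norm_add_le_max _ _).trans (max_le ?_ ?_)
  · exact (hf.norm_sub_sub_le hx hh).trans (pow_le_of_le_one (norm_nonneg _) hh two_ne_zero)
  · rw [norm_mul]
    exact mul_le_of_le_one_right (norm_nonneg _) (hf.norm_deriv_le_one hx)

theorem comp (hf : UnitBallTaylor f) (hg : UnitBallTaylor g) : UnitBallTaylor (f ∘ g) := by
  have hderiv : ∀ {x : K}, ‖x‖ ≤ 1 → deriv (f ∘ g) x = deriv f (g x) * deriv g x := fun hx =>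
    ((hf.hasDerivAt (hg.norm_le_one hx)).comp _ (hg.hasDerivAt hx)).deriv
  refine ⟨fun hx => hf.norm_le_one (hg.norm_le_one hx), fun hx => ?_, fun {x h} hx hh => ?_⟩
  · rw [hderiv hx, norm_mul]
    exact mul_le_one₀ (hf.norm_deriv_le_one (hg.norm_le_one hx)) (norm_nonneg _)
      (hg.norm_deriv_le_one hx)
  · set e := g (x + h) - g x
    have he : ‖e‖ ≤ ‖h‖ := hg.norm_sub_le hx hh
    have hy : ‖g x‖ ≤ 1 := hg.norm_le_one hx
    have split : (f ∘ g) (x + h) - (f ∘ g) x - h * deriv (f ∘ g) x =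
        (f (g x + e) - f (g x) - e * deriv f (g x)) +
          (g (x + h) - g x - h * deriv g x) * deriv f (g x) := by
      rw [hderiv hx, Function.comp_apply, Function.comp_apply, add_sub_cancel]
      ring
    rw [split]
    refine (norm_add_le_max _ _).trans (max_le ?_ ?_)
    · exact (hf.norm_sub_sub_le hy (he.trans hh)).trans (by gcongr)
    · rw [norm_mul]
      exact (mul_le_of_le_one_right (norm_nonneg _) (hf.norm_deriv_le_one hy)).trans
        (hg.norm_sub_sub_le hx hh)

theorem iterate (hf : UnitBallTaylor f) (k : ℕ) : UnitBallTaylor f^[k] := by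
  induction k with
  | zero => exact UnitBallTaylor.id
  | succ k ih => rw [Function.iterate_succ']; exact hf.comp ih

end UnitBallTaylor

end UnitBall

section PowerSeries

variable {K : Type*} [NontriviallyNormedField K] [IsUltrametricDist K]

theorem norm_natCast_add_one_mul_le (i : ℕ) (c : K) : ‖((i : K) + 1) * c‖ ≤ ‖c‖ := by
  rw [norm_mul]
  exact mul_le_of_le_one_left (norm_nonneg _) (by exact_mod_cast norm_natCast_le_one K (i + 1))

theorem norm_add_pow_succ_sub_sub_le {x h : K} (hx : ‖x‖ ≤ 1) (hh : ‖h‖ ≤ 1) (i : ℕ) :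
    ‖(x + h) ^ (i + 1) - x ^ (i + 1) - ((i : K) + 1) * x ^ i * h‖ ≤ ‖h‖ ^ 2 := by
  induction i with
  | zero => simp
  | succ i ih =>
    have split : (x + h) ^ (i + 2) - x ^ (i + 2) - (((i + 1 : ℕ) : K) + 1) * x ^ (i + 1) * h =
        (x + h) * ((x + h) ^ (i + 1) - x ^ (i + 1) - ((i : K) + 1) * x ^ i * h) +
          ((i : K) + 1) * x ^ i * h ^ 2 := by
      push_cast
      ring
    rw [split]
    refine (norm_add_le_max _ _).trans (max_le ?_ ?_)
    · rw [norm_mul]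
      exact (mul_le_of_le_one_left (norm_nonneg _)
        ((norm_add_le_max x h).trans (max_le hx hh))).trans ih
    · rw [mul_assoc]
      refine (norm_natCast_add_one_mul_le _ _).trans ?_
      rw [norm_mul, norm_pow, norm_pow]
      exact mul_le_of_le_one_left (by positivity) (pow_le_one₀ (norm_nonneg _) hx)

variable {a : ℕ → K}

theorem norm_evalPS_le_one (ha : ∀ i, ‖a i‖ ≤ 1) {x : K} (hx : ‖x‖ ≤ 1) : ‖evalPS a x‖ ≤ 1 :=
  norm_tsum_le_of_forall_le_of_nonneg zero_le_one fun i => by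
    rw [norm_mul, norm_pow]
    exact mul_le_one₀ (ha i) (by positivity) (pow_le_one₀ (norm_nonneg _) hx)

variable [CompleteSpace K]

theorem summable_mul_pow (ha0 : Tendsto a atTop (𝓝 0)) {x : K} (hx : ‖x‖ ≤ 1) :
    Summable fun i => a i * x ^ i := by
  refine NonarchimedeanAddGroup.summable_of_tendsto_cofinite_zero ?_
  rw [Nat.cofinite_eq_atTop]
  refine squeeze_zero_norm (fun i => ?_) (tendsto_norm_zero.comp ha0)
  rw [norm_mul, norm_pow]
  exact mul_le_of_le_one_right (norm_nonneg _) (pow_le_one₀ (norm_nonneg _) hx)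

theorem norm_evalPS_add_sub_sub_le (ha : ∀ i, ‖a i‖ ≤ 1) (ha0 : Tendsto a atTop (𝓝 0))
    {x h : K} (hx : ‖x‖ ≤ 1) (hh : ‖h‖ ≤ 1) :
    ‖evalPS a (x + h) - evalPS a x - h * evalPS (fun i => ((i : K) + 1) * a (i + 1)) x‖ ≤
      ‖h‖ ^ 2 := by
  have hxh : ‖x + h‖ ≤ 1 := (norm_add_le_max x h).trans (max_le hx hh)
  have ha0' : Tendsto (fun i : ℕ => ((i : K) + 1) * a (i + 1)) atTop (𝓝 0) :=
    squeeze_zero_norm (fun i => norm_natCast_add_one_mul_le i _)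
      (tendsto_norm_zero.comp (ha0.comp (tendsto_add_atTop_nat 1)))
  have shift : ∀ {y : K}, ‖y‖ ≤ 1 → evalPS a y = a 0 + ∑' i, a (i + 1) * y ^ (i + 1) :=
    fun hy => by rw [evalPS, (summable_mul_pow ha0 hy).tsum_eq_zero_add, pow_zero, mul_one]
  have termwise :
      evalPS a (x + h) - evalPS a x - h * evalPS (fun i => ((i : K) + 1) * a (i + 1)) x =
        ∑' i, a (i + 1) * ((x + h) ^ (i + 1) - x ^ (i + 1) - ((i : K) + 1) * x ^ i * h) := by
    have S₁ := (summable_nat_add_iff 1).mpr (summable_mul_pow ha0 hxh)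
    have S₂ := (summable_nat_add_iff 1).mpr (summable_mul_pow ha0 hx)
    rw [shift hxh, shift hx, evalPS, ← tsum_mul_left, add_sub_add_left_eq_sub,
      ← S₁.tsum_sub S₂, ← (S₁.sub S₂).tsum_sub ((summable_mul_pow ha0' hx).mul_left h)]
    congr 1
    funext i
    ring
  rw [termwise]
  refine norm_tsum_le_of_forall_le_of_nonneg (by positivity) fun i => ?_
  rw [norm_mul]
  exact (mul_le_of_le_one_left (norm_nonneg _) (ha _)).trans
    (norm_add_pow_succ_sub_sub_le hx hh i)

theorem unitBallTaylor_evalPS (ha : ∀ i, ‖a i‖ ≤ 1) (ha0 : Tendsto a atTop (𝓝 0)) :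
    UnitBallTaylor (evalPS a) := by
  have hderiv : ∀ {x : K}, ‖x‖ ≤ 1 →
      deriv (evalPS a) x = evalPS (fun i => ((i : K) + 1) * a (i + 1)) x := fun hx =>
    (hasDerivAt_of_norm_sub_sub_mul_le_sq fun _ hh =>
      norm_evalPS_add_sub_sub_le ha ha0 hx hh).deriv
  refine ⟨norm_evalPS_le_one ha, fun hx => ?_, fun hx hh => ?_⟩
  · rw [hderiv hx]
    exact norm_evalPS_le_one (fun i => (norm_natCast_add_one_mul_le i _).trans (ha _)) hx
  · rw [hderiv hx]
    exact norm_evalPS_add_sub_sub_le ha ha0 hx hh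

end PowerSeries

theorem statement7_general {K : Type*} [NontriviallyNormedField K] [IsUltrametricDist K]
    [CompleteSpace K]
    (π : K) (hπ0 : 0 < ‖π‖) (hπ1 : ‖π‖ < 1)
    (a : ℕ → K) (ha : ∀ i, ‖a i‖ ≤ 1) (ha0 : Tendsto a atTop (𝓝 0))
    (k n : ℕ)
    (x : K) (hx : ‖x‖ ≤ 1)
    (t : K) (ht : ‖t‖ ≤ 1) :
    ‖((evalPS a)^[k] (x + π ^ n * t) - (x + π ^ n * t)) / π ^ n -
        (((evalPS a)^[k] x - x) / π ^ n + t * (deriv ((evalPS a)^[k]) x - 1))‖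
      ≤ ‖π‖ ^ n := by
  have hπn0 : π ^ n ≠ 0 := pow_ne_zero n (norm_pos_iff.mp hπ0)
  have hπn1 : ‖π ^ n‖ ≤ 1 := by
    rw [norm_pow]
    exact pow_le_one₀ hπ0.le hπ1.le
  simpa only [norm_pow] using
    ((unitBallTaylor_evalPS ha ha0).iterate k).norm_sub_div_sub_le hπn0 hπn1 hx ht

/-- let `φ ∈ O_K⟨x⟩`, `k, n ≥ 1`, `ψ = φ^{∘k}`, and `x ∈ O_K` with
`ψ(x) ≡ x (mod πⁿ)`.  With `aₙ(x) = ψ'(x)` and `bₙ(x) = (ψ(x) − x)/πⁿ ∈ O_K`, for all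
`t ∈ O_K`: `bₙ(x + πⁿt) ≡ bₙ(x) + t(aₙ(x) − 1) (mod πⁿ)`. -/
theorem statement7 {K : Type*} [NontriviallyNormedField K] [IsUltrametricDist K]
    [CompleteSpace K]
    (π : K) (hπ0 : 0 < ‖π‖) (hπ1 : ‖π‖ < 1) (hπmax : ∀ y : K, ‖y‖ < 1 → ‖y‖ ≤ ‖π‖)
    (a : ℕ → K) (ha : ∀ i, ‖a i‖ ≤ 1) (ha0 : Tendsto a atTop (𝓝 0))
    (k n : ℕ) (hk : 1 ≤ k) (hn : 1 ≤ n)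
    (x : K) (hx : ‖x‖ ≤ 1) (hfix : ‖(evalPS a)^[k] x - x‖ ≤ ‖π‖ ^ n)
    (t : K) (ht : ‖t‖ ≤ 1) :
    ‖((evalPS a)^[k] (x + π ^ n * t) - (x + π ^ n * t)) / π ^ n -
        (((evalPS a)^[k] x - x) / π ^ n + t * (deriv ((evalPS a)^[k]) x - 1))‖
      ≤ ‖π‖ ^ n :=
  statement7_general π hπ0 hπ1 a ha ha0 k n x hx t ht
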